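/- arXiv:1512.08976 — 2 statements merged into one kernel-verified Lean document; each statement's English description precedes it below -/
import Mathlib

section
/- Let a, b ∈ A and p ∈ P. Then: (i) ‖aba‖ ≤ ‖a²‖·‖b‖ = ‖a‖²·‖b‖; (ii) the quadratic mapping J_a : A → A, J_a(b) := aba, is norm continuous; (iii) if p ≠ 0 then ‖p‖ = 1; (iv) ‖pap‖ ≤ ‖a‖. -/
/-- A synaptic algebra: a real vector subspace `carrier` of a unital associative
real algebra `R`, containing `1`, equipped with a positive cone `Pos` making it a
partially ordered archimedean real vector space with order unit `1`, and
satisfying conditions [SA2]–[SA9]. The partial order is `a ≤ b ↔ b - a ∈ Pos`. -/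
structure SynapticAlgebra (R : Type*) [Ring R] [Algebra ℝ R] where
  carrier : Set R
  one_mem : (1 : R) ∈ carrier
  add_mem : ∀ {a b : R}, a ∈ carrier → b ∈ carrier → a + b ∈ carrier
  smul_mem : ∀ (t : ℝ) {a : R}, a ∈ carrier → t • a ∈ carrier
  neg_mem : ∀ {a : R}, a ∈ carrier → -a ∈ carrier
  Pos : Set R
  pos_subset : Pos ⊆ carrier
  pos_add : ∀ {a b : R}, a ∈ Pos → b ∈ Pos → a + b ∈ Pos
  pos_smul : ∀ {t : ℝ}, 0 ≤ t → ∀ {a : R}, a ∈ Pos → t • a ∈ Pos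
  pos_antisymm : ∀ {a : R}, a ∈ Pos → -a ∈ Pos → a = 0
  arch : ∀ {a b : R}, a ∈ carrier → b ∈ carrier →
    (∀ n : ℕ, b - (n : ℝ) • a ∈ Pos) → -a ∈ Pos
  one_pos : (1 : R) ∈ Pos
  orderUnit : ∀ {a : R}, a ∈ carrier → ∃ n : ℕ, (n : ℝ) • (1 : R) - a ∈ Pos
  SA2 : ∀ {a b : R}, a ∈ Pos → b ∈ Pos → a * b = b * a → a * b ∈ Pos
  SA3 : ∀ {a : R}, a ∈ carrier → a * a ∈ Pos
  SA4 : ∀ {a b : R}, a ∈ Pos → b ∈ Pos → a * b * a ∈ Pos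
  SA5 : ∀ {a b : R}, a ∈ carrier → b ∈ Pos → a * b * a = 0 → a * b = 0 ∧ b * a = 0
  SA6 : ∀ {a : R}, a ∈ Pos →
    ∃ b : R, b ∈ Pos ∧ (∀ c ∈ carrier, c * a = a * c → c * b = b * c) ∧ b * b = a
  SA7 : ∀ {a : R}, a ∈ carrier →
    ∃ p : R, p ∈ carrier ∧ p * p = p ∧ ∀ b ∈ carrier, (a * b = 0 ↔ p * b = 0)
  SA8 : ∀ {a : R}, a ∈ carrier → a - 1 ∈ Pos → ∃ b ∈ carrier, a * b = 1 ∧ b * a = 1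
  SA9 : ∀ {a b : R}, a ∈ carrier → b ∈ carrier → ∀ s : ℕ → R,
    (∀ n, s n ∈ carrier) → (∀ n, s (n + 1) - s n ∈ Pos) →
    (∀ m n, s m * s n = s n * s m) → (∀ n, s n * b = b * s n) →
    (∀ ε : ℝ, 0 < ε →
      ∃ N : ℕ, ∀ n ≥ N, (a - s n) - (-ε) • (1 : R) ∈ Pos ∧ ε • (1 : R) - (a - s n) ∈ Pos) →
    a * b = b * a

namespace SynapticAlgebra

variable {R : Type*} [Ring R] [Algebra ℝ R]

/-- The partial order of the synaptic algebra: `a ≤ b` iff `b - a` is in the positive cone. -/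
def le (S : SynapticAlgebra R) (a b : R) : Prop := b - a ∈ S.Pos

/-- The identification of a real number `t` with the element `t·1` of the algebra. -/
def scal (_ : SynapticAlgebra R) (t : ℝ) : R := t • (1 : R)

/-- The order-unit norm: `‖a‖ = inf {t : ℝ | 0 < t ∧ -t·1 ≤ a ≤ t·1}`. -/
noncomputable def nrm (S : SynapticAlgebra R) (a : R) : ℝ :=
  sInf {t : ℝ | 0 < t ∧ S.le (S.scal (-t)) a ∧ S.le a (S.scal t)}

/-- `p` is a projection: an idempotent element of the algebra. -/
def IsProj (S : SynapticAlgebra R) (p : R) : Prop := p ∈ S.carrier ∧ p * p = p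

/-- `e` is an effect: an element with `0 ≤ e ≤ 1`. -/
def IsEff (S : SynapticAlgebra R) (e : R) : Prop := e ∈ S.carrier ∧ S.le 0 e ∧ S.le e 1

/-- `b ∈ CC(a)`: `b` is in the algebra and commutes with every element of the
algebra that commutes with `a` (the double commutant of `a`). -/
def inCC (S : SynapticAlgebra R) (a b : R) : Prop :=
  b ∈ S.carrier ∧ ∀ c ∈ S.carrier, c * a = a * c → c * b = b * c

/-- The square root of a positive element (chosen via [SA6]; it is unique). -/
noncomputable def sqrt (S : SynapticAlgebra R) (a : R) : R :=
  @dite R (a ∈ S.Pos) (Classical.dec _) (fun h => Classical.choose (S.SA6 h)) (fun _ => 0)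

/-- The carrier projection `a°` of `a` (chosen via [SA7]; it is unique):
the projection `p` such that for all `b` in the algebra, `ab = 0 ↔ pb = 0`. -/
noncomputable def carr (S : SynapticAlgebra R) (a : R) : R :=
  @dite R (a ∈ S.carrier) (Classical.dec _) (fun h => Classical.choose (S.SA7 h)) (fun _ => 0)

/-- Absolute value: `|a| := (a²)^{1/2}`. -/
noncomputable def abs (S : SynapticAlgebra R) (a : R) : R := S.sqrt (a * a)

/-- Positive part: `a⁺ := ½(|a| + a)`. -/
noncomputable def posPart (S : SynapticAlgebra R) (a : R) : R := (1/2 : ℝ) • (S.abs a + a)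

/-- Negative part: `a⁻ := ½(|a| − a)`. -/
noncomputable def negPart (S : SynapticAlgebra R) (a : R) : R := (1/2 : ℝ) • (S.abs a - a)

/-- Signum: `sgn(a) := (a⁺)° − (a⁻)°`. -/
noncomputable def sgn (S : SynapticAlgebra R) (a : R) : R :=
  S.carr (S.posPart a) - S.carr (S.negPart a)

/-- The Sasaki mapping: `φ_a(b) := (aba)°`. -/
noncomputable def sas (S : SynapticAlgebra R) (a b : R) : R := S.carr (a * b * a)

/-- `m` is the infimum of the projections `p` and `q` in the poset `P` of projections. -/
def IsMeet (S : SynapticAlgebra R) (p q m : R) : Prop :=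
  S.IsProj m ∧ S.le m p ∧ S.le m q ∧ ∀ r, S.IsProj r → S.le r p → S.le r q → S.le r m

/-- `j` is the supremum of the projections `p` and `q` in the poset `P` of projections. -/
def IsJoin (S : SynapticAlgebra R) (p q j : R) : Prop :=
  S.IsProj j ∧ S.le p j ∧ S.le q j ∧ ∀ r, S.IsProj r → S.le p r → S.le q r → S.le j r

end SynapticAlgebra

open SynapticAlgebra Filter

variable {R : Type*} [Ring R] [Algebra ℝ R]

/-!
The heart of the matter is that `J_a` is positive for every `a`, not only for `a ≥ 0` as [SA4]
says. By the archimedean property there is a least `ρ ≥ 0` with `a d a ≥ -ρ` for all effects `d`;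
pick `A > 0` with `a² ≤ A`.
For an effect `d = s²` the element `c = s (A - s a² s) s = A d - d a² d` satisfies `0 ≤ c ≤ A`, so
`a c a = A w - w² ≥ -Aρ` with `w = a d a`; hence `(A - 2w)² ≤ A² + 4Aρ` and `w ≥ -(√(A² + 4Aρ) - A)/2`,
a better bound than `-ρ` unless `ρ = 0`.

Once `J_a` is positive, `-‖b‖ ≤ b ≤ ‖b‖` and `a² ≤ ‖a²‖` give `-‖a²‖‖b‖ ≤ aba ≤ ‖a²‖‖b‖`;
`‖a²‖ = ‖a‖²` because `-t ≤ a ≤ t ⇔ a² ≤ t²` for `t > 0`, so `‖p‖ = ‖p‖²` for a projection `p`.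
-/

namespace SynapticAlgebra

variable {S : SynapticAlgebra R}

variable (S) in
theorem smul_one_mem (t : ℝ) : t • (1 : R) ∈ S.carrier := S.smul_mem t S.one_mem

theorem smul_one_mem_pos {t : ℝ} (ht : 0 ≤ t) : t • (1 : R) ∈ S.Pos := S.pos_smul ht S.one_pos

theorem sub_mem {a b : R} (ha : a ∈ S.carrier) (hb : b ∈ S.carrier) : a - b ∈ S.carrier := by
  simpa [sub_eq_add_neg] using S.add_mem ha (S.neg_mem hb)

theorem mul_self_mem {a : R} (ha : a ∈ S.carrier) : a * a ∈ S.carrier :=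
  S.pos_subset (S.SA3 ha)

theorem mul_add_mul_mem {a b : R} (ha : a ∈ S.carrier) (hb : b ∈ S.carrier) :
    a * b + b * a ∈ S.carrier := by
  have h : a * b + b * a = (a + b) * (a + b) - a * a - b * b := by noncomm_ring
  rw [h]
  exact sub_mem (sub_mem (mul_self_mem (S.add_mem ha hb)) (mul_self_mem ha)) (mul_self_mem hb)

theorem mul_mul_mem {a b : R} (ha : a ∈ S.carrier) (hb : b ∈ S.carrier) :
    a * b * a ∈ S.carrier := by
  have h : a * b * a =
      (1 / 2 : ℝ) • ((a * (a * b + b * a) + (a * b + b * a) * a) - (a * a * b + b * (a * a))) := by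
    simp only [mul_add, add_mul, ← mul_assoc]
    module
  rw [h]
  exact S.smul_mem _ (sub_mem (mul_add_mul_mem ha (mul_add_mul_mem ha hb))
    (mul_add_mul_mem (mul_self_mem ha) hb))

theorem mem_pos_of_forall_add_smul_one {x : R} (hx : x ∈ S.carrier)
    (h : ∀ ε : ℝ, 0 < ε → x + ε • (1 : R) ∈ S.Pos) : x ∈ S.Pos := by
  have hn : ∀ n : ℕ, (1 : R) - (n : ℝ) • (-x) ∈ S.Pos := by
    intro n
    rcases Nat.eq_zero_or_pos n with rfl | hn
    · simpa using S.one_pos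
    · have hn : (0 : ℝ) < n := by exact_mod_cast hn
      convert S.pos_smul hn.le (h _ (inv_pos.2 hn)) using 1
      rw [smul_add, smul_smul, mul_inv_cancel₀ hn.ne']
      module
  simpa using S.arch (S.neg_mem hx) S.one_mem hn

variable (S) in
/-- `-t ≤ a ≤ t` in the order of `S`. -/
def AbsLe (a : R) (t : ℝ) : Prop := a + t • (1 : R) ∈ S.Pos ∧ t • (1 : R) - a ∈ S.Pos

theorem AbsLe.mono {a : R} {t t' : ℝ} (h : S.AbsLe a t) (htt' : t ≤ t') : S.AbsLe a t' := by
  have hpad := smul_one_mem_pos (S := S) (sub_nonneg.2 htt')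
  constructor
  · convert S.pos_add h.1 hpad using 1; module
  · convert S.pos_add h.2 hpad using 1; module

theorem absLe_of_forall_pos {a : R} {t : ℝ} (ha : a ∈ S.carrier)
    (h : ∀ ε : ℝ, 0 < ε → S.AbsLe a (t + ε)) : S.AbsLe a t := by
  constructor
  · refine mem_pos_of_forall_add_smul_one (S.add_mem ha (S.smul_one_mem t)) fun ε hε => ?_
    convert (h ε hε).1 using 1; module
  · refine mem_pos_of_forall_add_smul_one (sub_mem (S.smul_one_mem t) ha) fun ε hε => ?_
    convert (h ε hε).2 using 1; module

theorem exists_absLe {a : R} (ha : a ∈ S.carrier) : ∃ t, 0 < t ∧ S.AbsLe a t := by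
  obtain ⟨n, hn⟩ := S.orderUnit ha
  obtain ⟨m, hm⟩ := S.orderUnit (S.neg_mem ha)
  refine ⟨n + m + 1, by positivity, ?_, ?_⟩
  · convert S.pos_add hm (smul_one_mem_pos (S := S) (by positivity : (0 : ℝ) ≤ n + 1)) using 1
    module
  · convert S.pos_add hn (smul_one_mem_pos (S := S) (by positivity : (0 : ℝ) ≤ m + 1)) using 1
    module

theorem nrm_eq_sInf (a : R) : S.nrm a = sInf {t : ℝ | 0 < t ∧ S.AbsLe a t} := by
  simp only [nrm, le, scal, AbsLe, neg_smul, sub_neg_eq_add]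

theorem nrm_nonneg (a : R) : 0 ≤ S.nrm a := by
  rw [nrm_eq_sInf]
  exact Real.sInf_nonneg fun _ ht => ht.1.le

theorem nrm_le_of_absLe {a : R} {t : ℝ} (ht : 0 ≤ t) (h : S.AbsLe a t) : S.nrm a ≤ t := by
  rw [nrm_eq_sInf]
  refine le_of_forall_pos_le_add fun ε hε => csInf_le ⟨0, fun _ hs => hs.1.le⟩ ?_
  exact ⟨by linarith, h.mono (by linarith)⟩

theorem absLe_nrm {a : R} (ha : a ∈ S.carrier) : S.AbsLe a (S.nrm a) := by
  refine absLe_of_forall_pos ha fun ε hε => ?_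
  have hlt : sInf {t : ℝ | 0 < t ∧ S.AbsLe a t} < S.nrm a + ε := by
    rw [← nrm_eq_sInf]; linarith
  obtain ⟨t, ⟨-, ht⟩, htε⟩ := exists_lt_of_csInf_lt (exists_absLe ha) hlt
  exact ht.mono htε.le

theorem eq_zero_of_nrm_eq_zero {a : R} (ha : a ∈ S.carrier) (h : S.nrm a = 0) : a = 0 := by
  obtain ⟨h₁, h₂⟩ := absLe_nrm ha
  rw [h, zero_smul, add_zero] at h₁
  rw [h, zero_smul, zero_sub] at h₂
  exact S.pos_antisymm h₁ h₂

theorem AbsLe.mul_self {a : R} {t : ℝ} (h : S.AbsLe a t) :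
    (t * t) • (1 : R) - a * a ∈ S.Pos := by
  have e₁ : (t • (1 : R) - a) * (t • 1 + a) = (t * t) • 1 - a * a := by
    simp only [sub_mul, mul_add, smul_mul_assoc, mul_smul_comm, one_mul, mul_one]
    module
  have e₂ : (t • (1 : R) + a) * (t • 1 - a) = (t * t) • 1 - a * a := by
    simp only [add_mul, mul_sub, smul_mul_assoc, mul_smul_comm, one_mul, mul_one]
    module
  have hta : t • (1 : R) + a ∈ S.Pos := add_comm a _ ▸ h.1
  exact e₁ ▸ S.SA2 h.2 hta (e₁.trans e₂.symm)

theorem absLe_of_mul_self {a : R} {t : ℝ} (ha : a ∈ S.carrier) (ht : 0 < t)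
    (h : (t * t) • (1 : R) - a * a ∈ S.Pos) : S.AbsLe a t := by
  have hunscale : ∀ x : R, (2 * t) • x ∈ S.Pos → x ∈ S.Pos := fun x hx => by
    have h := S.pos_smul (by positivity : (0 : ℝ) ≤ (2 * t)⁻¹) hx
    rwa [smul_smul, inv_mul_cancel₀ (by positivity), one_smul] at h
  -- `(t ± a)² + (t² - a²) = 2t (t ± a)`
  constructor
  · refine hunscale _ ?_
    convert S.pos_add (S.SA3 (S.add_mem ha (S.smul_one_mem t))) h using 1
    simp only [add_mul, mul_add, smul_mul_assoc, mul_smul_comm, one_mul, mul_one]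
    module
  · refine hunscale _ ?_
    convert S.pos_add (S.SA3 (sub_mem (S.smul_one_mem t) ha)) h using 1
    simp only [sub_mul, mul_sub, smul_mul_assoc, mul_smul_comm, one_mul, mul_one]
    module

theorem nrm_mul_self {a : R} (ha : a ∈ S.carrier) : S.nrm (a * a) = S.nrm a ^ 2 := by
  have hn := nrm_nonneg (S := S) a
  apply le_antisymm
  · rw [pow_two]
    exact nrm_le_of_absLe (mul_nonneg hn hn)
      ⟨S.pos_add (S.SA3 ha) (smul_one_mem_pos (mul_nonneg hn hn)), (absLe_nrm ha).mul_self⟩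
  · refine le_of_forall_pos_le_add fun ε hε => ?_
    have hpos : 0 < S.nrm (a * a) + ε := by linarith [nrm_nonneg (S := S) (a * a)]
    set t := Real.sqrt (S.nrm (a * a) + ε)
    have htt : t * t = S.nrm (a * a) + ε := Real.mul_self_sqrt hpos.le
    have hsq : (t * t) • (1 : R) - a * a ∈ S.Pos := by
      rw [htt]
      convert S.pos_add (absLe_nrm (mul_self_mem ha)).2 (smul_one_mem_pos (S := S) hε.le) using 1
      module
    have hle := nrm_le_of_absLe (Real.sqrt_pos.2 hpos).le
      (absLe_of_mul_self ha (Real.sqrt_pos.2 hpos) hsq)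
    nlinarith

variable (S) in
/-- `J_a` maps every effect `0 ≤ d ≤ 1` above `-ρ`. -/
def QuadLowerBound (a : R) (ρ : ℝ) : Prop :=
  ∀ d ∈ S.Pos, 1 - d ∈ S.Pos → a * d * a + ρ • (1 : R) ∈ S.Pos

theorem QuadLowerBound.mono {a : R} {ρ ρ' : ℝ} (h : S.QuadLowerBound a ρ) (hρ : ρ ≤ ρ') :
    S.QuadLowerBound a ρ' := fun d hd hd₁ => by
  convert S.pos_add (h d hd hd₁) (smul_one_mem_pos (S := S) (sub_nonneg.2 hρ)) using 1
  module

theorem quadLowerBound_of_forall_gt {a : R} {L : ℝ} (ha : a ∈ S.carrier)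
    (h : ∀ ρ, L < ρ → S.QuadLowerBound a ρ) : S.QuadLowerBound a L := fun d hd hd₁ => by
  refine mem_pos_of_forall_add_smul_one
    (S.add_mem (mul_mul_mem ha (S.pos_subset hd)) (S.smul_one_mem L)) fun ε hε => ?_
  convert h (L + ε) (by linarith) d hd hd₁ using 1
  module

theorem QuadLowerBound.mul_mul_add_mem_pos {a c : R} {ρ τ : ℝ} (h : S.QuadLowerBound a ρ)
    (hc : c ∈ S.Pos) (hτ : 0 < τ) (hcτ : τ • (1 : R) - c ∈ S.Pos) :
    a * c * a + (τ * ρ) • (1 : R) ∈ S.Pos := by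
  have hd : 1 - τ⁻¹ • c ∈ S.Pos := by
    convert S.pos_smul (inv_pos.2 hτ).le hcτ using 1
    rw [smul_sub, smul_smul, inv_mul_cancel₀ hτ.ne', one_smul]
  convert S.pos_smul hτ.le (h _ (S.pos_smul (inv_pos.2 hτ).le hc) hd) using 1
  simp only [smul_add, smul_smul, mul_smul_comm, smul_mul_assoc, mul_inv_cancel₀ hτ.ne', one_smul]

theorem exists_quadLowerBound {a : R} (ha : a ∈ S.carrier) :
    ∃ ρ, 0 ≤ ρ ∧ S.QuadLowerBound a ρ := by
  obtain ⟨n, hn⟩ := S.orderUnit (S.neg_mem ha)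
  set x := a + (n : ℝ) • (1 : R) with hx_def
  have hx : x ∈ S.Pos := by
    convert hn using 1
    module
  obtain ⟨m, hm⟩ := S.orderUnit (mul_self_mem (S.pos_subset hx))
  refine ⟨n * (m + 1), by positivity, fun d hd hd₁ => ?_⟩
  have hd_sq : (1 * 1 : ℝ) • (1 : R) - d * d ∈ S.Pos := by
    refine AbsLe.mul_self ⟨?_, ?_⟩ <;> rw [one_smul]
    exacts [S.pos_add hd S.one_pos, hd₁]
  have hn₀ : (0 : ℝ) ≤ n := n.cast_nonneg
  -- `a d a + n (m + 1) = x d x + n² d + n (x - d)² + n (m - x²) + n (1 - d²)`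
  convert S.pos_add (S.pos_add (S.pos_add (S.pos_add (S.SA4 hx hd)
    (S.pos_smul (sq_nonneg (n : ℝ)) hd))
    (S.pos_smul hn₀ (S.SA3 (sub_mem (S.pos_subset hx) (S.pos_subset hd)))))
    (S.pos_smul hn₀ hm)) (S.pos_smul hn₀ hd_sq) using 1
  simp only [hx_def, add_mul, mul_add, sub_mul, mul_sub, smul_mul_assoc, mul_smul_comm, one_mul,
    mul_one, smul_add, smul_sub, smul_smul]
  module

theorem QuadLowerBound.improve {a : R} {A ρ : ℝ} (ha : a ∈ S.carrier) (hA : 0 < A)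
    (haA : A • (1 : R) - a * a ∈ S.Pos) (hρ : 0 ≤ ρ) (h : S.QuadLowerBound a ρ) :
    S.QuadLowerBound a ((Real.sqrt (A ^ 2 + 4 * A * ρ) - A) / 2) := by
  intro d hd hd₁
  obtain ⟨s, hs, -, rfl⟩ := S.SA6 hd
  have hsa : A • (1 : R) - s * (a * a) * s ∈ S.Pos := by
    convert S.pos_add (S.SA4 hs haA) (S.pos_smul hA.le hd₁) using 1
    simp only [mul_sub, sub_mul, smul_mul_assoc, mul_smul_comm, mul_one]
    module
  -- `c := s (A - s a² s) s = A d - d a² d` lies between `0` and `A`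
  set c := s * (A • (1 : R) - s * (a * a) * s) * s with hc_def
  have hc : c ∈ S.Pos := S.SA4 hs hsa
  have hcA : A • (1 : R) - c ∈ S.Pos := by
    convert S.pos_add (S.pos_smul hA.le hd₁) (S.SA4 hd (S.SA3 ha)) using 1
    simp only [hc_def, mul_sub, sub_mul, smul_mul_assoc, mul_smul_comm, mul_one, smul_sub,
      mul_assoc]
    module
  have hJc := h.mul_mul_add_mem_pos hc hA hcA
  -- with `w := a d a` one has `a c a = A w - w²`, so `(A - 2w)² ≤ A² + 4Aρ`
  set w := a * (s * s) * a with hw_def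
  have hacA : a * c * a = A • w - w * w := by
    simp only [hc_def, hw_def, mul_sub, sub_mul, smul_mul_assoc, mul_smul_comm, mul_one,
      mul_assoc]
  set t := Real.sqrt (A ^ 2 + 4 * A * ρ)
  have ht : 0 < t := Real.sqrt_pos.2 (by positivity)
  have htt : t * t = A ^ 2 + 4 * A * ρ := Real.mul_self_sqrt (by positivity)
  have hsq : (t * t) • (1 : R) - (A • (1 : R) - (2 : ℝ) • w) * (A • 1 - (2 : ℝ) • w) ∈ S.Pos := by
    convert S.pos_smul (by norm_num : (0 : ℝ) ≤ 4) hJc using 1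
    rw [htt, hacA]
    simp only [mul_sub, sub_mul, smul_mul_assoc, mul_smul_comm, one_mul, mul_one, smul_sub,
      smul_add, smul_smul]
    module
  have hw := (absLe_of_mul_self (sub_mem (S.smul_one_mem A)
    (S.smul_mem 2 (mul_mul_mem ha (S.pos_subset hd)))) ht hsq).2
  convert S.pos_smul (by norm_num : (0 : ℝ) ≤ 1 / 2) hw using 1
  module

theorem mul_mul_mem_pos {a c : R} (ha : a ∈ S.carrier) (hc : c ∈ S.Pos) :
    a * c * a ∈ S.Pos := by
  obtain ⟨m, hm⟩ := S.orderUnit (mul_self_mem ha)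
  have hA : (0 : ℝ) < m + 1 := by positivity
  have haA : ((m : ℝ) + 1) • (1 : R) - a * a ∈ S.Pos := by
    convert S.pos_add hm S.one_pos using 1
    module
  set T := {ρ : ℝ | 0 ≤ ρ ∧ S.QuadLowerBound a ρ}
  have hT : T.Nonempty := exists_quadLowerBound ha
  have hT₀ : BddBelow T := ⟨0, fun _ hρ => hρ.1⟩
  set L := sInf T
  have hL : S.QuadLowerBound a L := quadLowerBound_of_forall_gt ha fun ρ hρ => by
    obtain ⟨ρ₀, hρ₀, hlt⟩ := exists_lt_of_csInf_lt hT hρ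
    exact hρ₀.2.mono hlt.le
  have hL₀ : L = 0 := by
    have hL_nonneg : 0 ≤ L := le_csInf hT fun _ hρ => hρ.1
    by_contra hne
    have hLpos : 0 < L := lt_of_le_of_ne hL_nonneg (Ne.symm hne)
    have hle := csInf_le hT₀ ⟨div_nonneg (sub_nonneg.2 (Real.le_sqrt_of_sq_le (by nlinarith)))
      zero_le_two, hL.improve ha hA haA hL_nonneg⟩
    have hlt : Real.sqrt (((m : ℝ) + 1) ^ 2 + 4 * (m + 1) * L) < (m + 1) + 2 * L :=
      (Real.sqrt_lt' (by positivity)).2 (by nlinarith)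
    linarith
  obtain ⟨n, hn⟩ := S.orderUnit (S.pos_subset hc)
  simpa [hL₀] using hL.mul_mul_add_mem_pos hc (τ := n + 1) (by positivity)
    (by convert S.pos_add hn S.one_pos using 1; module)

theorem AbsLe.mul_mul {a b : R} {s t : ℝ} (ha : a ∈ S.carrier) (hb : S.AbsLe b t) (ht : 0 ≤ t)
    (has : s • (1 : R) - a * a ∈ S.Pos) : S.AbsLe (a * b * a) (s * t) := by
  constructor
  · convert S.pos_add (mul_mul_mem_pos ha hb.1) (S.pos_smul ht has) using 1
    simp only [mul_add, add_mul, smul_mul_assoc, mul_smul_comm, mul_one, smul_sub, smul_smul]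
    module
  · convert S.pos_add (mul_mul_mem_pos ha hb.2) (S.pos_smul ht has) using 1
    simp only [mul_sub, sub_mul, smul_mul_assoc, mul_smul_comm, mul_one, smul_sub, smul_smul]
    module

theorem nrm_mul_mul_le {a b : R} (ha : a ∈ S.carrier) (hb : b ∈ S.carrier) :
    S.nrm (a * b * a) ≤ S.nrm (a * a) * S.nrm b :=
  nrm_le_of_absLe (mul_nonneg (nrm_nonneg _) (nrm_nonneg _))
    ((absLe_nrm hb).mul_mul ha (nrm_nonneg _) (absLe_nrm (mul_self_mem ha)).2)

theorem IsProj.nrm_eq_zero_or_eq_one {p : R} (hp : S.IsProj p) :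
    S.nrm p = 0 ∨ S.nrm p = 1 := by
  have h := nrm_mul_self hp.1
  rw [hp.2] at h
  rcases mul_eq_zero.1 (show S.nrm p * (S.nrm p - 1) = 0 by linear_combination -h) with h | h
  exacts [.inl h, .inr (sub_eq_zero.1 h)]

theorem IsProj.nrm_le_one {p : R} (hp : S.IsProj p) : S.nrm p ≤ 1 := by
  rcases hp.nrm_eq_zero_or_eq_one with h | h <;> simp [h]

theorem IsProj.nrm_eq_one {p : R} (hp : S.IsProj p) (hp₀ : p ≠ 0) : S.nrm p = 1 :=
  hp.nrm_eq_zero_or_eq_one.resolve_left fun h => hp₀ (eq_zero_of_nrm_eq_zero hp.1 h)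

end SynapticAlgebra

/-- Lemma 4.3: (i) `‖aba‖ ≤ ‖a²‖·‖b‖ = ‖a‖²·‖b‖`; (ii) `J_a` is norm continuous;
(iii) if `p ≠ 0` is a projection then `‖p‖ = 1`; (iv) `‖pap‖ ≤ ‖a‖`. -/
theorem stmt12 (S : SynapticAlgebra R) {a b p : R} (ha : a ∈ S.carrier)
    (hb : b ∈ S.carrier) (hp : S.IsProj p) :
    (S.nrm (a * b * a) ≤ S.nrm (a * a) * S.nrm b ∧
      S.nrm (a * a) * S.nrm b = S.nrm a ^ 2 * S.nrm b) ∧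
    (∀ c ∈ S.carrier, ∀ ε : ℝ, 0 < ε → ∃ δ : ℝ, 0 < δ ∧
      ∀ d ∈ S.carrier, S.nrm (d - c) < δ → S.nrm (a * d * a - a * c * a) < ε) ∧
    (p ≠ 0 → S.nrm p = 1) ∧
    (S.nrm (p * a * p) ≤ S.nrm a) := by
  refine ⟨⟨nrm_mul_mul_le ha hb, by rw [nrm_mul_self ha]⟩, fun c hc ε hε => ?_,
    hp.nrm_eq_one, ?_⟩
  · refine ⟨ε / (S.nrm a ^ 2 + 1), by positivity, fun d hd hdc => ?_⟩
    have hJ : S.nrm (a * d * a - a * c * a) ≤ S.nrm a ^ 2 * S.nrm (d - c) := by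
      rw [← nrm_mul_self ha, show a * d * a - a * c * a = a * (d - c) * a by noncomm_ring]
      exact nrm_mul_mul_le ha (sub_mem hd hc)
    calc S.nrm (a * d * a - a * c * a) ≤ S.nrm a ^ 2 * (ε / (S.nrm a ^ 2 + 1)) :=
          hJ.trans (mul_le_mul_of_nonneg_left hdc.le (by positivity))
      _ < ε := by
          rw [mul_div_assoc', div_lt_iff₀ (by positivity)]
          linarith
  · calc S.nrm (p * a * p) ≤ S.nrm (p * p) * S.nrm a := nrm_mul_mul_le hp.1 ha
      _ ≤ 1 * S.nrm a := by
          rw [hp.2]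
          exact mul_le_mul_of_nonneg_right hp.nrm_le_one (nrm_nonneg a)
      _ = S.nrm a := one_mul _
end

section
/- With p ↦ p^⊥ := 1 − p as the orthocomplementation, P is an orthomodular lattice, and for all p, q ∈ P, φ_p(q) = p ∧ (p^⊥ ∨ q). In particular, for all p, q ∈ P the infimum p ∧ q exists in P and equals p − φ_p(q^⊥). -/
open SynapticAlgebra Filter

variable {R : Type*} [Ring R] [Algebra ℝ R]

section Helpers

variable (S : SynapticAlgebra R)

lemma zero_pos' : (0:R) ∈ S.Pos := by
  have := S.pos_smul (le_refl (0:ℝ)) S.one_pos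
  simpa using this

lemma zero_mem' : (0:R) ∈ S.carrier := S.pos_subset (zero_pos' S)

lemma sub_mem' {a b : R} (ha : a ∈ S.carrier) (hb : b ∈ S.carrier) :
    a - b ∈ S.carrier := by
  have := S.add_mem ha (S.neg_mem hb)
  simpa [sub_eq_add_neg] using this

lemma le_antisymm' {a b : R} (h1 : S.le a b) (h2 : S.le b a) : a = b := by
  have h2' : -(b - a) ∈ S.Pos := by
    have : -(b-a) = a - b := by abel
    rw [this]; exact h2
  have := S.pos_antisymm h1 h2'
  have := sub_eq_zero.mp this
  exact this.symm

lemma proj_pos {p : R} (hp : S.IsProj p) : p ∈ S.Pos := by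
  have := S.SA3 hp.1; rwa [hp.2] at this

lemma proj_compl {p : R} (hp : S.IsProj p) : S.IsProj (1 - p) := by
  refine ⟨sub_mem' S S.one_mem hp.1, ?_⟩
  have h : (1-p)*(1-p) = 1 - p - p + p*p := by noncomm_ring
  rw [h, hp.2]; abel

lemma compl_pos {p : R} (hp : S.IsProj p) : (1 - p) ∈ S.Pos :=
  proj_pos S (proj_compl S hp)

lemma ann_left {a b : R} (ha : a ∈ S.carrier) (hb : b ∈ S.Pos) (h : a * b = 0) :
    b * a = 0 := by
  have h0 : a * b * a = 0 := by rw [h, zero_mul]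
  exact (S.SA5 ha hb h0).2

lemma ann_right {a b : R} (ha : a ∈ S.carrier) (hb : b ∈ S.Pos) (h : b * a = 0) :
    a * b = 0 := by
  have h0 : a * b * a = 0 := by rw [mul_assoc, h, mul_zero]
  exact (S.SA5 ha hb h0).1

lemma le_of_mul {p q : R} (hp : S.IsProj p) (hq : S.IsProj q)
    (h1 : p*q = p) (h2 : q*p = p) : S.le p q := by
  have key : (1-p) * q * (1-p) = q - p := by
    rw [show (1-p)*q*(1-p) = q - p*q - q*p + p*q*p from by noncomm_ring, h1, h2, hp.2]
    abel
  have := S.SA4 (compl_pos S hp) (proj_pos S hq)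
  rw [key] at this
  exact this

lemma mul_of_le {p q : R} (hp : S.IsProj p) (hq : S.IsProj q) (h : S.le p q) :
    p * q = p ∧ q * p = p := by
  have h1 : p * (1-q) * p ∈ S.Pos := S.SA4 (proj_pos S hp) (compl_pos S hq)
  have h2 : p * (q - p) * p ∈ S.Pos := S.SA4 (proj_pos S hp) h
  have hs : p*(1-q)*p + p*(q-p)*p = p*p - p*p*p := by noncomm_ring
  simp only [hp.2, sub_self] at hs
  have hneg : -(p*(1-q)*p) = p*(q-p)*p := neg_eq_of_add_eq_zero_right hs
  have h0 : p*(1-q)*p = 0 := S.pos_antisymm h1 (by rw [hneg]; exact h2)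
  obtain ⟨h5a, h5b⟩ := S.SA5 hp.1 (compl_pos S hq) h0
  constructor
  · rw [mul_sub, mul_one, sub_eq_zero] at h5a; exact h5a.symm
  · rw [sub_mul, one_mul, sub_eq_zero] at h5b; exact h5b.symm

lemma carr_spec {a : R} (ha : a ∈ S.carrier) :
    S.carr a ∈ S.carrier ∧ S.carr a * S.carr a = S.carr a ∧
      ∀ b ∈ S.carrier, (a * b = 0 ↔ S.carr a * b = 0) := by
  simp only [SynapticAlgebra.carr, dif_pos ha]
  exact Classical.choose_spec (S.SA7 ha)

end Helpers

section Helpers2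

variable (S : SynapticAlgebra R)

lemma carr_proj {a : R} (ha : a ∈ S.carrier) : S.IsProj (S.carr a) :=
  ⟨(carr_spec S ha).1, (carr_spec S ha).2.1⟩

lemma carr_mul {a : R} (ha : a ∈ S.Pos) :
    a * S.carr a = a ∧ S.carr a * a = a := by
  obtain ⟨hc, hcc, hspec⟩ := carr_spec S (S.pos_subset ha)
  have hf1 : S.carr a * (1 - S.carr a) = 0 := by
    rw [mul_sub, mul_one, hcc, sub_self]
  have h1 : a * (1 - S.carr a) = 0 :=
    (hspec _ (sub_mem' S S.one_mem hc)).mpr hf1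
  have haf : a * S.carr a = a := by
    rw [mul_sub, mul_one, sub_eq_zero] at h1; exact h1.symm
  have h2 : (1 - S.carr a) * a = 0 :=
    ann_left S (S.pos_subset ha) (compl_pos S (carr_proj S (S.pos_subset ha))) ?_
  · refine ⟨haf, ?_⟩
    rw [sub_mul, one_mul, sub_eq_zero] at h2; exact h2.symm
  · exact h1

lemma carr_of_proj {p : R} (hp : S.IsProj p) : S.carr p = p := by
  obtain ⟨hc, hcc, hspec⟩ := carr_spec S hp.1
  have h1 : p * (1 - S.carr p) = 0 :=
    (hspec _ (sub_mem' S S.one_mem hc)).mpr (by rw [mul_sub, mul_one, hcc, sub_self])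
  have h2 : S.carr p * (1 - p) = 0 :=
    (hspec _ (sub_mem' S S.one_mem hp.1)).mp (by rw [mul_sub, mul_one, hp.2, sub_self])
  have h3 : (1 - S.carr p) * p = 0 :=
    ann_left S hp.1 (compl_pos S ⟨hc, hcc⟩) h1
  have e1 : S.carr p * p = p := by
    rw [sub_mul, one_mul, sub_eq_zero] at h3; exact h3.symm
  have e2 : S.carr p * p = S.carr p := by
    rw [mul_sub, mul_one, sub_eq_zero] at h2; exact h2.symm
  rw [← e2]; exact e1

/-- For `e = p b p` with `p` a projection and `b ≥ 0`, the carrier `f = e°`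
is a projection satisfying `f p = p f = f`. -/
lemma carr_sandwich {p b : R} (hp : S.IsProj p) (hb : b ∈ S.Pos) :
    S.IsProj (S.carr (p*b*p)) ∧ S.carr (p*b*p) * p = S.carr (p*b*p) ∧
      p * S.carr (p*b*p) = S.carr (p*b*p) := by
  have heC : p*b*p ∈ S.Pos := S.SA4 (proj_pos S hp) hb
  obtain ⟨hfc, hff, hspec⟩ := carr_spec S (S.pos_subset heC)
  have hfproj : S.IsProj (S.carr (p*b*p)) := ⟨hfc, hff⟩
  have hpp : p * (1-p) = 0 := by rw [mul_sub, mul_one, hp.2, sub_self]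
  have he1p : (p*b*p) * (1 - p) = 0 := by rw [mul_assoc, hpp, mul_zero]
  have hf1p : S.carr (p*b*p) * (1 - p) = 0 :=
    (hspec _ (sub_mem' S S.one_mem hp.1)).mp he1p
  have hfp : S.carr (p*b*p) * p = S.carr (p*b*p) := by
    rw [mul_sub, mul_one, sub_eq_zero] at hf1p; exact hf1p.symm
  have h1pf : (1 - p) * S.carr (p*b*p) = 0 :=
    ann_right S (sub_mem' S S.one_mem hp.1) (proj_pos S hfproj) hf1p
  have hpf : p * S.carr (p*b*p) = S.carr (p*b*p) := by
    rw [sub_mul, one_mul, sub_eq_zero] at h1pf; exact h1pf.symm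
  exact ⟨hfproj, hfp, hpf⟩

/-- Core lemma: `p ∧ q = p - (p(1-q)p)°`. -/
lemma meet_core {p q : R} (hp : S.IsProj p) (hq : S.IsProj q) :
    S.IsMeet p q (p - S.carr (p * (1-q) * p)) := by
  have hqc := proj_compl S hq
  have hePos : p*(1-q)*p ∈ S.Pos := S.SA4 (proj_pos S hp) (proj_pos S hqc)
  obtain ⟨hfc, hff, hspec⟩ := carr_spec S (S.pos_subset hePos)
  obtain ⟨hef, hfe⟩ := carr_mul S hePos
  obtain ⟨hfproj, hfp, hpf⟩ := carr_sandwich S hp (proj_pos S hqc)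
  set f := S.carr (p*(1-q)*p) with hf
  have hfPos : f ∈ S.Pos := proj_pos S hfproj
  -- m = p - f is a projection
  have hm_mem : p - f ∈ S.carrier := sub_mem' S hp.1 hfc
  have hm_mul : (p - f) * (p - f) = p - f := by
    rw [show (p-f)*(p-f) = p*p - p*f - f*p + f*f from by noncomm_ring,
      hp.2, hpf, hfp, hff]
    abel
  have hmproj : S.IsProj (p - f) := ⟨hm_mem, hm_mul⟩
  -- m ≤ p
  have hmp : (p-f)*p = p - f := by rw [sub_mul, hp.2, hfp]
  have hpm : p*(p-f) = p - f := by rw [mul_sub, hp.2, hpf]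
  have hlemp : S.le (p-f) p := le_of_mul S hmproj hp hmp hpm
  -- auxiliary products
  have t2 : p*(1-q)*f = p*(1-q)*p := by
    calc p*(1-q)*f = p*(1-q)*(p*f) := by rw [hpf]
      _ = (p*(1-q)*p)*f := by rw [mul_assoc (p*(1-q)) p f]
      _ = p*(1-q)*p := hef
  have t3 : f*(1-q)*p = p*(1-q)*p := by
    calc f*(1-q)*p = (f*p)*(1-q)*p := by rw [hfp]
      _ = f*(p*(1-q)*p) := by noncomm_ring
      _ = p*(1-q)*p := hfe
  have t4 : f*(1-q)*f = p*(1-q)*p := by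
    calc f*(1-q)*f = f*(1-q)*(p*f) := by rw [hpf]
      _ = (f*(1-q)*p)*f := by noncomm_ring
      _ = (p*(1-q)*p)*f := by rw [t3]
      _ = p*(1-q)*p := hef
  have key : (p-f)*(1-q)*(p-f) = 0 := by
    rw [show (p-f)*(1-q)*(p-f)
        = p*(1-q)*p - p*(1-q)*f - f*(1-q)*p + f*(1-q)*f from by noncomm_ring,
      t2, t3, t4]
    abel
  obtain ⟨h5a, h5b⟩ := S.SA5 hm_mem (proj_pos S hqc) key
  have hmq : (p-f)*q = p-f := by
    rw [mul_sub, mul_one, sub_eq_zero] at h5a; exact h5a.symm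
  have hqm : q*(p-f) = p-f := by
    rw [sub_mul, one_mul, sub_eq_zero] at h5b; exact h5b.symm
  have hlemq : S.le (p-f) q := le_of_mul S hmproj hq hmq hqm
  refine ⟨hmproj, hlemp, hlemq, fun r hr hrp hrq => ?_⟩
  obtain ⟨hrp1, hrp2⟩ := mul_of_le S hr hp hrp
  obtain ⟨hrq1, hrq2⟩ := mul_of_le S hr hq hrq
  have her : (p*(1-q)*p) * r = 0 := by
    calc p*(1-q)*p*r = p*(1-q)*(p*r) := by rw [mul_assoc]
      _ = p*((1-q)*r) := by rw [hrp2, mul_assoc]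
      _ = p*(r - q*r) := by rw [sub_mul, one_mul]
      _ = 0 := by rw [hrq2, sub_self, mul_zero]
  have hfr : f * r = 0 := (hspec r hr.1).mp her
  have hrf : r * f = 0 := ann_right S hr.1 hfPos hfr
  have hrm : r*(p-f) = r := by rw [mul_sub, hrp1, hrf, sub_zero]
  have hmr : (p-f)*r = r := by rw [sub_mul, hrp2, hfr, sub_zero]
  exact le_of_mul S hr hmproj hrm hmr

end Helpers2

section Helpers3

variable (S : SynapticAlgebra R)

lemma join_compl {p q m : R} (hm : S.IsMeet (1-p) (1-q) m) : S.IsJoin p q (1-m) := by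
  obtain ⟨hmproj, hm1, hm2, hmg⟩ := hm
  refine ⟨proj_compl S hmproj, ?_, ?_, ?_⟩
  · show (1-m) - p ∈ S.Pos
    rw [show (1-m) - p = (1-p) - m from by abel]; exact hm1
  · show (1-m) - q ∈ S.Pos
    rw [show (1-m) - q = (1-q) - m from by abel]; exact hm2
  · intro r hr h1 h2
    have hr1 : S.le (1-r) (1-p) := by
      show (1-p) - (1-r) ∈ S.Pos
      rw [show (1-p) - (1-r) = r - p from by abel]; exact h1
    have hr2 : S.le (1-r) (1-q) := by
      show (1-q) - (1-r) ∈ S.Pos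
      rw [show (1-q) - (1-r) = r - q from by abel]; exact h2
    have := hmg (1-r) (proj_compl S hr) hr1 hr2
    show r - (1-m) ∈ S.Pos
    rw [show r - (1-m) = m - (1-r) from by abel]; exact this

lemma join_unique {p q j j' : R} (h1 : S.IsJoin p q j) (h2 : S.IsJoin p q j') :
    j = j' :=
  le_antisymm' S (h1.2.2.2 j' h2.1 h2.2.1 h2.2.2.1) (h2.2.2.2 j h1.1 h1.2.1 h1.2.2.1)

end Helpers3

section Main

variable (S : SynapticAlgebra R)

lemma thm_part7 {p q : R} (hp : S.IsProj p) (hq : S.IsProj q) :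
    ∀ j, S.IsJoin (1-p) q j → S.IsMeet p j (S.sas p q) := by
  intro j hj
  obtain ⟨hfproj, hfp, hpf⟩ := carr_sandwich S hp (proj_pos S hq)
  set f := S.carr (p*q*p) with hfdef
  have hfPos : f ∈ S.Pos := proj_pos S hfproj
  -- the meet of p and 1-q is p - f
  have M : S.IsMeet p (1-q) (p - f) := by
    have := meet_core S hp (proj_compl S hq)
    rwa [sub_sub_cancel] at this
  obtain ⟨hmproj, hMp, hMq, hMg⟩ := M
  -- j₀ := (1-p) + f
  have hf1p : f*(1-p) = 0 := by rw [mul_sub, mul_one, hfp, sub_self]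
  have h1pf : (1-p)*f = 0 := by rw [sub_mul, one_mul, hpf, sub_self]
  have hj0proj : S.IsProj ((1-p) + f) := by
    refine ⟨S.add_mem (sub_mem' S S.one_mem hp.1) hfproj.1, ?_⟩
    rw [show ((1-p)+f)*((1-p)+f) = (1-p)*(1-p) + (1-p)*f + f*(1-p) + f*f from by
      noncomm_ring, (proj_compl S hp).2, h1pf, hf1p, hfproj.2]
    abel
  have hj0 : S.IsJoin (1-p) q ((1-p) + f) := by
    refine ⟨hj0proj, ?_, ?_, ?_⟩
    · show ((1-p)+f) - (1-p) ∈ S.Pos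
      rw [show ((1-p)+f) - (1-p) = f from by abel]; exact hfPos
    · show ((1-p)+f) - q ∈ S.Pos
      rw [show ((1-p)+f) - q = (1-q) - (p-f) from by abel]; exact hMq
    · intro r hr h1 h2
      have hr1 : S.le (1-r) p := by
        show p - (1-r) ∈ S.Pos
        rw [show p - (1-r) = r - (1-p) from by abel]; exact h1
      have hr2 : S.le (1-r) (1-q) := by
        show (1-q) - (1-r) ∈ S.Pos
        rw [show (1-q) - (1-r) = r - q from by abel]; exact h2
      have := hMg (1-r) (proj_compl S hr) hr1 hr2
      show r - ((1-p)+f) ∈ S.Pos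
      rw [show r - ((1-p)+f) = (p-f) - (1-r) from by abel]; exact this
  have hjeq : j = (1-p) + f := join_unique S hj hj0
  rw [hjeq]
  show S.IsMeet p ((1-p)+f) f
  refine ⟨hfproj, le_of_mul S hfproj hp hfp hpf, ?_, ?_⟩
  · refine le_of_mul S hfproj hj0proj ?_ ?_
    · rw [mul_add, hf1p, hfproj.2, zero_add]
    · rw [add_mul, h1pf, hfproj.2, zero_add]
  · intro r hr hr_p hr_j
    obtain ⟨hrp1, hrp2⟩ := mul_of_le S hr hp hr_p
    obtain ⟨hrj1, hrj2⟩ := mul_of_le S hr hj0proj hr_j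
    have h1 : r*f = r := by
      rw [mul_add, mul_sub, mul_one, hrp1, sub_self, zero_add] at hrj1; exact hrj1
    have h2 : f*r = r := by
      rw [add_mul, sub_mul, one_mul, hrp2, sub_self, zero_add] at hrj2; exact hrj2
    exact le_of_mul S hr hfproj h1 h2

lemma thm_part6 {p q : R} (hp : S.IsProj p) (hq : S.IsProj q) (hpq : S.le p q) :
    ∃ m, S.IsMeet (1-p) q m ∧ S.IsJoin p m q := by
  obtain ⟨hpq1, hpq2⟩ := mul_of_le S hp hq hpq
  have hmproj : S.IsProj (q - p) := by
    refine ⟨sub_mem' S hq.1 hp.1, ?_⟩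
    rw [show (q-p)*(q-p) = q*q - q*p - p*q + p*p from by noncomm_ring,
      hq.2, hpq2, hpq1, hp.2]
    abel
  refine ⟨q - p, ⟨hmproj, ?_, ?_, ?_⟩, ⟨hq, hpq, ?_, ?_⟩⟩
  · show (1-p) - (q-p) ∈ S.Pos
    rw [show (1-p) - (q-p) = 1 - q from by abel]; exact compl_pos S hq
  · show q - (q-p) ∈ S.Pos
    rw [show q - (q-p) = p - 0 from by abel]
    have := proj_pos S hp; rwa [sub_zero]
  · intro r hr h1 h2
    obtain ⟨hr1, hr2⟩ := mul_of_le S hr (proj_compl S hp) h1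
    obtain ⟨hr3, hr4⟩ := mul_of_le S hr hq h2
    have hrp : r*p = 0 := by
      rw [mul_sub, mul_one, sub_eq_self] at hr1; exact hr1
    have hpr : p*r = 0 := by
      rw [sub_mul, one_mul, sub_eq_self] at hr2; exact hr2
    refine le_of_mul S hr hmproj ?_ ?_
    · rw [mul_sub, hr3, hrp, sub_zero]
    · rw [sub_mul, hr4, hpr, sub_zero]
  · show q - (q-p) ∈ S.Pos
    rw [show q - (q-p) = p - 0 from by abel]
    have := proj_pos S hp; rwa [sub_zero]
  · intro r hr h1 h2
    obtain ⟨ha1, ha2⟩ := mul_of_le S hp hr h1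
    obtain ⟨hb1, hb2⟩ := mul_of_le S hmproj hr h2
    refine le_of_mul S hq hr ?_ ?_
    · have : q*r = (q-p)*r + p*r := by noncomm_ring
      rw [this, hb1, ha1]; abel
    · have : r*q = r*(q-p) + r*p := by noncomm_ring
      rw [this, hb2, ha2]; abel

end Main

/-- Theorem 5.6: `P` is an orthomodular lattice under `p ↦ 1 − p`, and for all
projections `p, q`: `φ_p(q) = p ∧ (p^⊥ ∨ q)`; in particular `p ∧ q` exists and
equals `p − φ_p(q^⊥)`. -/
theorem stmt18 (S : SynapticAlgebra R) :
    (∀ p q, S.IsProj p → S.IsProj q → ∃ m, S.IsMeet p q m) ∧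
    (∀ p q, S.IsProj p → S.IsProj q → ∃ j, S.IsJoin p q j) ∧
    (∀ p, S.IsProj p → S.IsProj (1 - p) ∧ 1 - (1 - p) = p) ∧
    (∀ p q, S.IsProj p → S.IsProj q → S.le p q → S.le (1 - q) (1 - p)) ∧
    (∀ p, S.IsProj p → S.IsMeet p (1 - p) 0) ∧
    (∀ p q, S.IsProj p → S.IsProj q → S.le p q →
      ∃ m, S.IsMeet (1 - p) q m ∧ S.IsJoin p m q) ∧
    (∀ p q, S.IsProj p → S.IsProj q →
      ∀ j, S.IsJoin (1 - p) q j → S.IsMeet p j (S.sas p q)) ∧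
    (∀ p q, S.IsProj p → S.IsProj q → S.IsMeet p q (p - S.sas p (1 - q))) := by
  refine ⟨?_, ?_, ?_, ?_, ?_, ?_, ?_, ?_⟩
  · exact fun p q hp hq => ⟨_, meet_core S hp hq⟩
  · exact fun p q hp hq =>
      ⟨_, join_compl S (meet_core S (proj_compl S hp) (proj_compl S hq))⟩
  · exact fun p hp => ⟨proj_compl S hp, sub_sub_cancel 1 p⟩
  · intro p q _ _ h
    show (1-p) - (1-q) ∈ S.Pos
    rw [show (1-p) - (1-q) = q - p from by abel]; exact h
  · intro p hp
    refine ⟨⟨zero_mem' S, mul_zero 0⟩, ?_, ?_, ?_⟩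
    · show p - 0 ∈ S.Pos
      rw [sub_zero]; exact proj_pos S hp
    · show (1-p) - 0 ∈ S.Pos
      rw [sub_zero]; exact compl_pos S hp
    · intro r hr h1 h2
      obtain ⟨ha, _⟩ := mul_of_le S hr hp h1
      obtain ⟨hb, _⟩ := mul_of_le S hr (proj_compl S hp) h2
      have hr0 : r = 0 := by
        rw [mul_sub, mul_one, ha, sub_self] at hb; exact hb.symm
      show (0:R) - r ∈ S.Pos
      rw [hr0, sub_zero]; exact zero_pos' S
  · exact fun p q hp hq h => thm_part6 S hp hq h
  · exact fun p q hp hq => thm_part7 S hp hq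
  · exact fun p q hp hq => meet_core S hp hq
end
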